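/- arXiv:1307.7232 — 8 statements merged into one kernel-verified Lean document; each statement's English description precedes it below -/
import Mathlib

section
/- If a is pseudo Drazin invertible in a Banach algebra A, then a^‡ is pseudo Drazin invertible and (a^‡)^‡ = a²a^‡. -/
/-- Membership in the Jacobson radical of a ring. -/
def MemJacobson {A : Type*} [Ring A] (x : A) : Prop := ∀ y : A, IsUnit (1 - y * x)

/-- `b` is a pseudo Drazin inverse of `a`. -/
def IsPDrazinInv {A : Type*} [Ring A] (a b : A) : Prop :=
  a * b = b * a ∧ b * a * b = b ∧ ∃ k : ℕ, 1 ≤ k ∧ MemJacobson (a ^ k - a ^ (k + 1) * b)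

theorem stmt1 {A : Type*} [NormedRing A] [NormedAlgebra ℂ A] [CompleteSpace A]
    (a ad : A) (h : IsPDrazinInv a ad) :
    IsPDrazinInv ad (a ^ 2 * ad) := by
  obtain ⟨h1, h2, -⟩ := h
  have R1 : ∀ x : A, ad * (a * x) = a * (ad * x) := fun x => by
    rw [← mul_assoc, ← h1, mul_assoc]
  have hk : a * ad * ad = ad := by rw [h1, h2]
  have R3 : ∀ x : A, a * (ad * (ad * x)) = ad * x := fun x => by
    rw [← mul_assoc, ← mul_assoc, hk]
  have R4 : a * (ad * ad) = ad := by rw [← mul_assoc, hk]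
  refine ⟨?_, ?_, 2, by norm_num, ?_⟩
  · simp only [pow_succ, pow_zero, one_mul, mul_assoc, R1]
  · simp only [pow_succ, pow_zero, one_mul, mul_assoc, R1, R3, R4]
  · have : ad ^ 2 - ad ^ (2 + 1) * (a ^ 2 * ad) = 0 := by
      simp only [pow_succ, pow_zero, one_mul, mul_assoc, R1, R3, R4, sub_self]
    rw [this]
    intro y
    simp
end

section
/- If a is pseudo Drazin invertible in a Banach algebra A, then a^‡ · (a^‡)^‡ = a a^‡. -/
/-- Abstract key lemma: if `e` is an idempotent acting as a two-sided unit on `ad`, with a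
"group inverse" `c` of `ad` relative to `e`, and `b` is a pseudo Drazin inverse of `ad`,
then `ad * b = e`. -/
theorem aux_pd {A : Type*} [Ring A] (ad b e c : A)
    (hee : e * e = e) (head : e * ad = ad) (hade : ad * e = ad)
    (hadc : ad * c = e) (hcad : c * ad = e)
    (hbc : ad * b = b * ad) (hbb : b * ad * b = b)
    (k : ℕ) (hk : 1 ≤ k) (hJ : MemJacobson (ad ^ k - ad ^ (k + 1) * b)) :
    ad * b = e := by
  -- b commutes with e
  have h1 : e * (b * e) = b * e := by
    calc e * (b * e) = (ad * c) * (b * (ad * c)) := by rw [hadc]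
      _ = ad * (c * ((b * ad) * c)) := by noncomm_ring
      _ = ad * (c * ((ad * b) * c)) := by rw [hbc]
      _ = (ad * (c * ad)) * (b * c) := by noncomm_ring
      _ = (ad * e) * (b * c) := by rw [hcad]
      _ = ad * (b * c) := by rw [hade]
      _ = (b * ad) * c := by rw [← mul_assoc, hbc]
      _ = b * (ad * c) := by rw [mul_assoc]
      _ = b * e := by rw [hadc]
  have h2 : e * (b * e) = e * b := by
    calc e * (b * e) = (c * ad) * (b * (c * ad)) := by rw [hcad]
      _ = c * ((ad * b) * (c * ad)) := by noncomm_ring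
      _ = c * ((b * ad) * (c * ad)) := by rw [hbc]
      _ = c * (b * ((ad * c) * ad)) := by noncomm_ring
      _ = c * (b * (e * ad)) := by rw [hadc]
      _ = c * (b * ad) := by rw [head]
      _ = c * (ad * b) := by rw [hbc]
      _ = (c * ad) * b := by rw [mul_assoc]
      _ = e * b := by rw [hcad]
  have heb : e * b = b * e := h2.symm.trans h1
  have hef : e * (ad * b) = ad * b := by rw [← mul_assoc, head]
  have hfe : (ad * b) * e = ad * b := by
    rw [mul_assoc, ← heb, ← mul_assoc, hade]
  have hff : (ad * b) * (ad * b) = ad * b := by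
    calc (ad * b) * (ad * b) = ad * (b * ad * b) := by noncomm_ring
      _ = ad * b := by rw [hbb]
  have headn : ∀ n : ℕ, e * ad ^ (n + 1) = ad ^ (n + 1) := by
    intro n
    rw [pow_succ' ad n, ← mul_assoc, head]
  have hckn : ∀ n : ℕ, c ^ (n + 1) * ad ^ (n + 1) = e := by
    intro n
    induction n with
    | zero => simpa using hcad
    | succ m ih =>
        calc c ^ (m + 1 + 1) * ad ^ (m + 1 + 1)
            = (c ^ (m + 1) * c) * (ad * ad ^ (m + 1)) := by
              rw [pow_succ c (m + 1), pow_succ' ad (m + 1)]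
          _ = c ^ (m + 1) * ((c * ad) * ad ^ (m + 1)) := by noncomm_ring
          _ = c ^ (m + 1) * (e * ad ^ (m + 1)) := by rw [hcad]
          _ = c ^ (m + 1) * ad ^ (m + 1) := by rw [headn]
          _ = e := ih
  obtain ⟨m, rfl⟩ : ∃ m, k = m + 1 := ⟨k - 1, (Nat.succ_pred_eq_of_pos hk).symm⟩
  have hu : c ^ (m + 1) * (ad ^ (m + 1) - ad ^ (m + 1 + 1) * b) = e - ad * b := by
    rw [mul_sub, hckn]
    congr 1
    calc c ^ (m + 1) * (ad ^ (m + 1 + 1) * b)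
        = c ^ (m + 1) * ((ad ^ (m + 1) * ad) * b) := by rw [pow_succ ad (m + 1)]
      _ = (c ^ (m + 1) * ad ^ (m + 1)) * (ad * b) := by noncomm_ring
      _ = e * (ad * b) := by rw [hckn]
      _ = ad * b := hef
  have hJu : MemJacobson (e - ad * b) := by
    intro y
    have := hJ (y * c ^ (m + 1))
    rwa [mul_assoc, hu] at this
  have hu2 : (e - ad * b) * (e - ad * b) = e - ad * b := by
    rw [sub_mul, mul_sub, mul_sub, hee, hef, hfe, hff]
    abel
  have hunit : IsUnit (1 - (e - ad * b)) := by simpa using hJu 1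
  obtain ⟨v, hv⟩ := hunit
  have hz : (e - ad * b) * (1 - (e - ad * b)) = 0 := by
    rw [mul_sub, mul_one, hu2, sub_self]
  have hzero : e - ad * b = 0 := by
    calc e - ad * b = (e - ad * b) * 1 := (mul_one _).symm
      _ = (e - ad * b) * (↑v * ↑v⁻¹) := by rw [v.mul_inv]
      _ = ((e - ad * b) * ↑v) * ↑v⁻¹ := by rw [mul_assoc]
      _ = ((e - ad * b) * (1 - (e - ad * b))) * ↑v⁻¹ := by rw [hv]
      _ = 0 := by rw [hz, zero_mul]
  exact (sub_eq_zero.mp hzero).symm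

theorem stmt3 {A : Type*} [NormedRing A] [NormedAlgebra ℂ A] [CompleteSpace A]
    (a ad b : A) (h : IsPDrazinInv a ad) (hb : IsPDrazinInv ad b) :
    ad * b = a * ad := by
  obtain ⟨hc, had, -⟩ := h
  obtain ⟨hbc, hbb, k, hk, hJ⟩ := hb
  have hade : ad * (a * ad) = ad := by rw [← mul_assoc]; exact had
  have head : (a * ad) * ad = ad := by rw [hc]; exact had
  have hee : (a * ad) * (a * ad) = a * ad := by rw [mul_assoc, hade]
  have hadc : ad * (a * (a * ad)) = a * ad := by
    rw [← mul_assoc, ← hc]; exact hee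
  have hcad : (a * (a * ad)) * ad = a * ad := by rw [mul_assoc, head]
  exact aux_pd ad b (a * ad) (a * (a * ad)) hee head hade hadc hcad hbc hbb k hk hJ
end

section
/- Let a be pseudo Drazin invertible in a Banach algebra A. Then (a^‡)^‡ = a if and only if a is group invertible. -/
lemma jac_zero {A : Type*} [Ring A] : MemJacobson (0 : A) := by
  intro y; simp

lemma jac_mul_left {A : Type*} [Ring A] {x : A} (h : MemJacobson x) (z : A) :
    MemJacobson (z * x) := by
  intro y
  have := h (y * z)
  rwa [mul_assoc] at this

lemma jac_idem_zero {A : Type*} [Ring A] {e : A} (h : MemJacobson e) (he : e * e = e) :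
    e = 0 := by
  obtain ⟨u, hu⟩ := h 1
  rw [one_mul] at hu
  have h0 : e * (1 - e) = 0 := by rw [mul_sub, mul_one, he, sub_self]
  have : e * ((1 - e) * ↑u⁻¹) = 0 := by rw [← mul_assoc, h0, zero_mul]
  rwa [← hu, Units.mul_inv, mul_one] at this

/-- The group inverse commutes with everything commuting with `a`. -/
lemma comm_of_group {A : Type*} [Ring A] {a x c : A}
    (h1 : a * x = x * a) (h2 : x * a * x = x) (h3 : a * x * a = a)
    (hc : c * a = a * c) : c * x = x * c := by
  have hee : a * x * a * x = a * x := by rw [h3]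
  have haax : a * a * x = a := by rw [mul_assoc, h1, ← mul_assoc, h3]
  have haxx : a * x * x = x := by rw [h1, h2]
  have cancel : ∀ u : A, a * u = 0 → a * x * u = u → u = 0 := by
    intro u h0 h4
    rw [← h4, h1, mul_assoc, h0, mul_zero]
  have cancel' : ∀ u : A, u * a = 0 → u * (a * x) = u → u = 0 := by
    intro u h0 h4
    rw [← h4, ← mul_assoc, h0, zero_mul]
  have haxa : ∀ z : A, z * a * x * a = z * a := by
    intro z
    rw [mul_assoc, mul_assoc, ← mul_assoc a x a, h3]
  -- Step 1: a*x*c = a*x*c*a*x  (e c = e c e)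
  have hece : a * x * c = a * x * c * a * x := by
    have k1 : a * (a * x * c) = c * a := by
      rw [← mul_assoc, ← mul_assoc, haax, ← hc]
    have k2 : a * (a * x * c * a * x) = c * a := by
      have : a * (a * x * c * a * x) = a * a * x * c * a * x := by
        simp only [← mul_assoc]
      rw [this, haax, ← hc, mul_assoc c, mul_assoc c, haax]
    have h0 : a * (a * x * c - a * x * c * a * x) = 0 := by
      rw [mul_sub, k1, k2, sub_self]
    have h4 : a * x * (a * x * c - a * x * c * a * x)
        = a * x * c - a * x * c * a * x := by
      rw [mul_sub]
      have e1 : a * x * (a * x * c) = a * x * c := by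
        rw [← mul_assoc, ← mul_assoc, hee]
      have e2 : a * x * (a * x * c * a * x) = a * x * c * a * x := by
        simp only [← mul_assoc]
        rw [hee]
      rw [e1, e2]
    have := cancel _ h0 h4
    rw [sub_eq_zero] at this
    exact this
  -- Step 2: a*x*c*a = c*a
  have hEca : a * x * c * a = c * a := by
    rw [mul_assoc (a*x) c a, hc, ← mul_assoc, h3, ← hc]
  -- Step 3: c*a*x = a*x*c*a*x  ((1-e) c e = 0)
  have hcax : c * a * x = a * x * c * a * x := by
    have h0 : (c * a * x - a * x * c * a * x) * a = 0 := by
      rw [sub_mul, haxa c, haxa (a*x*c), hEca, sub_self]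
    have h4 : (c * a * x - a * x * c * a * x) * (a * x)
        = c * a * x - a * x * c * a * x := by
      rw [sub_mul]
      have e1 : c * a * x * (a * x) = c * a * x := by
        rw [← mul_assoc, haxa c]
      have e2 : a * x * c * a * x * (a * x) = a * x * c * a * x := by
        rw [← mul_assoc, haxa (a*x*c)]
      rw [e1, e2]
    have := cancel' _ h0 h4
    rw [sub_eq_zero] at this
    exact this
  -- combine: c*a*x = a*x*c
  have hce : c * a * x = a * x * c := by rw [hcax, ← hece]
  -- Step 4: x*c = c*x
  have h0 : a * (x * c - c * x) = 0 := by
    rw [mul_sub, ← mul_assoc, ← mul_assoc, ← hc, hce, sub_self]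
  have h4 : a * x * (x * c - c * x) = x * c - c * x := by
    rw [mul_sub]
    have e1 : a * x * (x * c) = x * c := by
      rw [← mul_assoc, haxx]
    have e2 : a * x * (c * x) = c * x := by
      rw [← mul_assoc, ← hce, mul_assoc, mul_assoc, ← mul_assoc a x x, haxx]
    rw [e1, e2]
  have := cancel _ h0 h4
  rw [sub_eq_zero] at this
  exact this.symm

theorem stmt4 {A : Type*} [NormedRing A] [NormedAlgebra ℂ A] [CompleteSpace A]
    (a ad : A) (h : IsPDrazinInv a ad) :
    IsPDrazinInv ad a ↔ ∃ x : A, a * x = x * a ∧ x * a * x = x ∧ a * x * a = a := by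
  obtain ⟨hc, hd, k, hk1, hJ⟩ := h
  constructor
  · rintro ⟨h1', h2', -⟩
    exact ⟨ad, hc, hd, h2'⟩
  · rintro ⟨x, hx1, hx2, hx3⟩
    -- x commutes with ad
    have hxd : ad * x = x * ad := comm_of_group hx1 hx2 hx3 hc.symm
    have hxaa : x * a * a = a := by rw [← hx1, hx3]
    have haax : a * a * x = a := by rw [mul_assoc, hx1, ← mul_assoc, hx3]
    -- x^n * a^(n+1) = a
    have hxan : ∀ m : ℕ, x * a ^ (m + 2) = a ^ (m + 1) := by
      intro m
      induction m with
      | zero =>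
        rw [pow_two, pow_one, ← mul_assoc, ← hx1, hx3]
      | succ n ih =>
        rw [pow_succ a (n + 2), ← mul_assoc, ih, ← pow_succ]
    have hpow : ∀ n : ℕ, x ^ n * a ^ (n + 1) = a := by
      intro n
      induction n with
      | zero => rw [pow_zero, one_mul, pow_one]
      | succ m ih =>
        rw [pow_succ x m, mul_assoc, hxan m, ih]
    have hk : x ^ (k - 1) * a ^ k = a := by
      have := hpow (k - 1)
      rwa [Nat.sub_add_cancel hk1] at this
    -- a - a*a*ad ∈ J
    have hJ1 : MemJacobson (a - a * a * ad) := by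
      have h2 : x ^ (k - 1) * (a ^ k - a ^ (k + 1) * ad) = a - a * a * ad := by
        rw [mul_sub, hk, pow_succ, ← mul_assoc, ← mul_assoc, hk]
      rw [← h2]
      exact jac_mul_left hJ _
    -- d := a*x - a*ad ∈ J
    have hdJ : MemJacobson (a * x - a * ad) := by
      have h2 : x * (a - a * a * ad) = a * x - a * ad := by
        rw [mul_sub, ← hx1, ← mul_assoc, ← mul_assoc, hxaa]
      rw [← h2]
      exact jac_mul_left hJ1 _
    -- d is idempotent
    have hdd : (a * x - a * ad) * (a * x - a * ad) = a * x - a * ad := by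
      have e1 : a * x * (a * x) = a * x := by
        rw [← mul_assoc, hx3]
      have e2 : a * x * (a * ad) = a * ad := by
        rw [← mul_assoc, hx3]
      have e3 : a * ad * (a * x) = a * ad := by
        rw [hc, mul_assoc ad a, ← mul_assoc a a x, haax]
      have e4 : a * ad * (a * ad) = a * ad := by
        rw [mul_assoc a ad (a * ad), ← mul_assoc ad a ad, hd]
      rw [sub_mul, mul_sub, mul_sub, e1, e2, e3, e4]
      abel
    have hd0 : a * x - a * ad = 0 := jac_idem_zero hdJ hdd
    have hax : a * x = a * ad := by rwa [sub_eq_zero] at hd0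
    have ha3 : a * ad * a = a := by rw [← hax, hx3]
    refine ⟨hc.symm, ha3, 1, le_refl 1, ?_⟩
    have : ad ^ 1 - ad ^ (1 + 1) * a = 0 := by
      rw [pow_one, pow_two, mul_assoc, ← hc, ← mul_assoc, hd, sub_self]
    rw [this]
    exact jac_zero
end

section
/- Let a, b be pseudo Drazin invertible elements of a Banach algebra A with ab = ba = 0. Then a + b is pseudo Drazin invertible and (a + b)^‡ = a^‡ + b^‡. -/
lemma memJacobson_mul_left {A : Type*} [Ring A] {x : A} (z : A) (hx : MemJacobson x) :
    MemJacobson (z * x) := fun y => by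
  rw [← mul_assoc]; exact hx (y * z)

lemma memJacobson_add {A : Type*} [Ring A] {x y : A} (hx : MemJacobson x)
    (hy : MemJacobson y) : MemJacobson (x + y) := by
  intro z
  obtain ⟨u, hu⟩ := hx z
  have h2 := hy (↑u⁻¹ * z)
  have key : (1 : A) - z * (x + y) = ↑u * (1 - ↑u⁻¹ * z * y) := by
    have h1 : (↑u * ↑u⁻¹ : A) = 1 := u.mul_inv
    calc (1 : A) - z * (x + y) = (1 - z * x) - z * y := by noncomm_ring
    _ = ↑u - (↑u * ↑u⁻¹) * z * y := by rw [h1, one_mul, hu]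
    _ = ↑u * (1 - ↑u⁻¹ * z * y) := by noncomm_ring
  rw [key]
  exact u.isUnit.mul h2

lemma add_pow_of_mul_eq_zero {A : Type*} [Ring A] {a b : A} (hab : a * b = 0)
    (hba : b * a = 0) : ∀ n, 1 ≤ n → (a + b) ^ n = a ^ n + b ^ n := by
  intro n hn
  induction n with
  | zero => omega
  | succ m ih =>
    rcases Nat.eq_or_lt_of_le hn with h | h
    · simp [← h]
    · have hm : 1 ≤ m := by omega
      have hab' : a ^ m * b = 0 := by
        obtain ⟨j, hj⟩ := Nat.exists_eq_add_of_le hm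
        rw [hj, add_comm, pow_add, pow_one, mul_assoc, hab, mul_zero]
      have hba' : b ^ m * a = 0 := by
        obtain ⟨j, hj⟩ := Nat.exists_eq_add_of_le hm
        rw [hj, add_comm, pow_add, pow_one, mul_assoc, hba, mul_zero]
      rw [pow_succ, ih hm, add_mul, mul_add, mul_add, hab', hba', add_zero, zero_add,
        ← pow_succ, ← pow_succ]

theorem stmt5 {A : Type*} [NormedRing A] [NormedAlgebra ℂ A] [CompleteSpace A]
    (a ad b bd : A) (ha : IsPDrazinInv a ad) (hb : IsPDrazinInv b bd)
    (hab : a * b = 0) (hba : b * a = 0) :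
    IsPDrazinInv (a + b) (ad + bd) := by
  obtain ⟨hc1, hi1, k1, hk1, hJ1⟩ := ha
  obtain ⟨hc2, hi2, k2, hk2, hJ2⟩ := hb
  have had1 : ad = a * (ad * ad) := by
    rw [← mul_assoc, hc1, hi1]
  have had2 : ad = ad * ad * a := by
    calc ad = ad * a * ad := hi1.symm
    _ = ad * (a * ad) := by rw [mul_assoc]
    _ = ad * (ad * a) := by rw [hc1]
    _ = ad * ad * a := by rw [mul_assoc]
  have hbd1 : bd = b * (bd * bd) := by
    rw [← mul_assoc, hc2, hi2]
  have hbd2 : bd = bd * bd * b := by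
    calc bd = bd * b * bd := hi2.symm
    _ = bd * (b * bd) := by rw [mul_assoc]
    _ = bd * (bd * b) := by rw [hc2]
    _ = bd * bd * b := by rw [mul_assoc]
  have hadb : ad * b = 0 := by rw [had2, mul_assoc, hab, mul_zero]
  have hbad : b * ad = 0 := by rw [had1, ← mul_assoc, hba, zero_mul]
  have hbda : bd * a = 0 := by rw [hbd2, mul_assoc, hba, mul_zero]
  have habd : a * bd = 0 := by rw [hbd1, ← mul_assoc, hab, zero_mul]
  refine ⟨?_, ?_, max k1 k2, le_max_of_le_left hk1, ?_⟩
  · calc (a + b) * (ad + bd)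
        = a * ad + a * bd + (b * ad + b * bd) := by noncomm_ring
      _ = a * ad + b * bd := by rw [habd, hbad]; simp
      _ = ad * a + bd * b := by rw [hc1, hc2]
      _ = ad * a + ad * b + (bd * a + bd * b) := by rw [hadb, hbda]; simp
      _ = (ad + bd) * (a + b) := by noncomm_ring
  · calc (ad + bd) * (a + b) * (ad + bd)
        = ad * a * ad + ad * (a * bd) + ad * b * (ad + bd) + bd * (b * ad)
          + bd * a * (ad + bd) + bd * b * bd := by noncomm_ring
      _ = ad + bd := by rw [habd, hadb, hbad, hbda, hi1, hi2]; simp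
  · set k := max k1 k2 with hk
    have hk1' : k1 ≤ k := le_max_left _ _
    have hk2' : k2 ≤ k := le_max_right _ _
    have hkpos : 1 ≤ k := le_max_of_le_left hk1
    have e1 : (a + b) ^ k = a ^ k + b ^ k := add_pow_of_mul_eq_zero hab hba k hkpos
    have e2 : (a + b) ^ (k + 1) = a ^ (k + 1) + b ^ (k + 1) :=
      add_pow_of_mul_eq_zero hab hba (k + 1) (by omega)
    have habd' : a ^ (k + 1) * bd = 0 := by rw [pow_succ, mul_assoc, habd, mul_zero]
    have hbad' : b ^ (k + 1) * ad = 0 := by rw [pow_succ, mul_assoc, hbad, mul_zero]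
    have expand : (a ^ (k + 1) + b ^ (k + 1)) * (ad + bd)
        = a ^ (k + 1) * ad + b ^ (k + 1) * bd := by
      rw [add_mul, mul_add, mul_add, habd', hbad', add_zero, zero_add]
    have key : (a + b) ^ k - (a + b) ^ (k + 1) * (ad + bd)
        = (a ^ k - a ^ (k + 1) * ad) + (b ^ k - b ^ (k + 1) * bd) := by
      rw [e1, e2, expand]; abel
    rw [key]
    have g1 : k - k1 + k1 = k := Nat.sub_add_cancel hk1'
    have g2 : k - k1 + (k1 + 1) = k + 1 := by omega
    have g3 : k - k2 + k2 = k := Nat.sub_add_cancel hk2'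
    have g4 : k - k2 + (k2 + 1) = k + 1 := by omega
    have f1 : a ^ k - a ^ (k + 1) * ad = a ^ (k - k1) * (a ^ k1 - a ^ (k1 + 1) * ad) := by
      rw [mul_sub, ← pow_add, ← mul_assoc, ← pow_add, g1, g2]
    have f2 : b ^ k - b ^ (k + 1) * bd = b ^ (k - k2) * (b ^ k2 - b ^ (k2 + 1) * bd) := by
      rw [mul_sub, ← pow_add, ← mul_assoc, ← pow_add, g3, g4]
    rw [f1, f2]
    exact memJacobson_add (memJacobson_mul_left _ hJ1) (memJacobson_mul_left _ hJ2)
end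

section
/- Let a, b be commuting pseudo Drazin invertible elements of a Banach algebra A (ab = ba). Then a + b is pseudo Drazin invertible if and only if 1 + a^‡ b is pseudo Drazin invertible; in that case (1 + a^‡ b)^‡ = a^Π + a²a^‡ (a + b)^‡, where a^Π = 1 − a a^‡. -/
section Jacobson

variable {A : Type*} [Ring A]

theorem isUnit_one_sub_of_mem_jacobson {x : A} (hx : x ∈ Ring.jacobson A) :
    IsUnit (1 - x) := by
  rw [← Ideal.jacobson_bot] at hx
  obtain ⟨z, hz⟩ := Ideal.mem_jacobson_iff.1 hx (-1)
  have hzx : z * (1 - x) = 1 := by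
    rw [Ideal.mem_bot] at hz
    calc z * (1 - x) = z * -1 * x + z - 1 + 1 := by noncomm_ring
      _ = 1 := by rw [hz, zero_add]
  obtain ⟨w, hw⟩ := Ideal.mem_jacobson_iff.1 (Ideal.mul_mem_left _ z hx) 1
  have hwz : w * z = 1 := by
    rw [Ideal.mem_bot] at hw
    calc w * z = w * 1 * (z * x) + w - 1 + w * (z * (1 - x)) - w + 1 := by noncomm_ring
      _ = 1 := by rw [hw, hzx, zero_add, mul_one, sub_self, zero_add]
  have hw' : w = 1 - x := by
    calc w = w * z * (1 - x) := by rw [mul_assoc, hzx, mul_one]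
      _ = 1 - x := by rw [hwz, one_mul]
  exact ⟨⟨1 - x, z, hw' ▸ hwz, hzx⟩, rfl⟩

theorem memJacobson_iff {x : A} : MemJacobson x ↔ x ∈ Ring.jacobson A := by
  refine ⟨fun h => ?_, fun hx y => isUnit_one_sub_of_mem_jacobson (Ideal.mul_mem_left _ y hx)⟩
  rw [← Ideal.jacobson_bot, Ideal.mem_jacobson_iff]
  intro y
  obtain ⟨u, hu⟩ := h (-y)
  refine ⟨↑u⁻¹, ?_⟩
  rw [Ideal.mem_bot]
  calc ↑u⁻¹ * y * x + ↑u⁻¹ - 1 = ↑u⁻¹ * (1 - -y * x) - 1 := by noncomm_ring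
    _ = 0 := by rw [← hu, Units.inv_mul, sub_self]

theorem comap_jacobson_le_jacobson_centralizer (T : Set A) :
    (Ring.jacobson A).comap (Subring.centralizer T).subtype ≤
      Ring.jacobson (Subring.centralizer T) := by
  intro x (hx : (x : A) ∈ Ring.jacobson A)
  rw [← Ideal.jacobson_bot, Ideal.mem_jacobson_iff]
  intro y
  obtain ⟨u, hu⟩ := isUnit_one_sub_of_mem_jacobson (Ideal.mul_mem_left _ (-(y : A)) hx)
  have hmem : 1 - -(y : A) * x ∈ Subring.centralizer T :=
    sub_mem (one_mem _) (mul_mem (neg_mem y.2) x.2)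
  have hinv : (↑u⁻¹ : A) ∈ Subring.centralizer T := fun m hm =>
    (Commute.units_inv_right (hu ▸ hmem m hm : Commute m u)).eq
  refine ⟨⟨_, hinv⟩, Subtype.ext ?_⟩
  change (↑u⁻¹ : A) * y * x + ↑u⁻¹ - 1 = 0
  calc (↑u⁻¹ : A) * y * x + ↑u⁻¹ - 1 = ↑u⁻¹ * (1 - -↑y * ↑x) - 1 := by noncomm_ring
    _ = 0 := by rw [← hu, Units.inv_mul, sub_self]

end Jacobson

abbrev centralizerCentralizerCommRing {A : Type*} [Ring A] {S : Set A}
    (hS : S.Pairwise Commute) : CommRing (Subring.centralizer (Set.centralizer S)) :=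
  { (Subring.centralizer (Set.centralizer S)).toRing with
    mul_comm := fun x y => Subtype.ext <|
      Set.centralizer_centralizer_comm_of_comm (fun _ ha _ hb => hS.of_refl ha hb) _ x.2 _ y.2 }

def IsPDrazinInvMod {R : Type*} [Ring R] (I : Ideal R) (a b : R) : Prop :=
  Commute a b ∧ b * a * b = b ∧ ∃ k : ℕ, 1 ≤ k ∧ a ^ k - a ^ (k + 1) * b ∈ I

theorem isPDrazinInv_coe_iff {A : Type*} [Ring A] {C : Subring A} {x y : C} :
    IsPDrazinInv (x : A) y ↔ IsPDrazinInvMod ((Ring.jacobson A).comap C.subtype) x y := by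
  simp only [IsPDrazinInv, IsPDrazinInvMod, memJacobson_iff, Ideal.mem_comap, commute_iff_eq,
    ← Subtype.coe_inj]
  rfl

section Commutative

variable {R : Type*} [CommRing R] {I : Ideal R}

theorem isPDrazinInvMod_iff {a b : R} :
    IsPDrazinInvMod I a b ↔ b * a * b = b ∧ ∃ k : ℕ, 1 ≤ k ∧ a ^ k * (1 - a * b) ∈ I := by
  have h (k : ℕ) : a ^ k - a ^ (k + 1) * b = a ^ k * (1 - a * b) := by ring
  simp only [IsPDrazinInvMod, Commute.all, true_and, h]

theorem IsPDrazinInvMod.exists_forall_pow_mul_mem {a b : R} (h : IsPDrazinInvMod I a b) :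
    ∃ k, ∀ m, k ≤ m → a ^ m * (1 - a * b) ∈ I := by
  obtain ⟨-, k, -, hk⟩ := isPDrazinInvMod_iff.1 h
  refine ⟨k, fun m hm => ?_⟩
  obtain ⟨r, rfl⟩ := Nat.exists_eq_add_of_le hm
  rw [add_comm, pow_add, mul_assoc]
  exact I.mul_mem_left _ hk

theorem IsPDrazinInvMod.isIdempotentElem_one_sub_mul {a b : R} (h : IsPDrazinInvMod I a b) :
    IsIdempotentElem (1 - a * b) :=
  IsIdempotentElem.one_sub (show a * b * (a * b) = a * b by linear_combination a * h.2.1)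

theorem pow_mul_eq_pow_mul_of_mul_eq {M : Type*} [CommMonoid M] {x y e : M}
    (h : x * e = y * e) (n : ℕ) : x ^ n * e = y ^ n * e := by
  induction n with
  | zero => simp
  | succ n ih => rw [pow_succ, mul_assoc, h, mul_left_comm, ih, ← mul_assoc, ← pow_succ']

theorem isUnit_one_add_of_pow_mem (hI : I ≤ Ring.jacobson R) {x : R} {n : ℕ}
    (hx : x ^ n ∈ I) : IsUnit (1 + x) := by
  have : x ∈ Ideal.jacobson ⊥ :=
    Ideal.isRadical_jacobson ⊥ ⟨n, Ideal.jacobson_bot (R := R) ▸ hI hx⟩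
  simpa [add_comm] using Ideal.mem_jacobson_bot.1 this 1

theorem add_pow_mul_mem_of_pow_mul_mem {a b p q : R} {m n : ℕ} (hp : IsIdempotentElem p)
    (hq : IsIdempotentElem q) (ha : a ^ m * p ∈ I) (hb : b ^ n * q ∈ I) :
    (a + b) ^ (m + n + 1) * (p * q) ∈ I := by
  have hpq := hp.mul hq
  rw [← hpq.pow_succ_eq (m + n), ← mul_pow, add_mul]
  refine I.add_pow_mem_of_pow_mem_of_le (m := m + 1) (n := n + 1) ?_ ?_ (by omega)
  · rw [mul_pow, hpq.pow_succ_eq]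
    convert I.mul_mem_right (a * q) ha using 1
    ring
  · rw [mul_pow, hpq.pow_succ_eq]
    convert I.mul_mem_right (b * p) hb using 1
    ring

theorem IsPDrazinInvMod.one_add_mul_of_add {a ad b c : R} (had : ad * a * ad = ad)
    (hc : IsPDrazinInvMod I (a + b) c) :
    IsPDrazinInvMod I (1 + ad * b) ((1 - a * ad) + a ^ 2 * ad * c) := by
  obtain ⟨hcsc, k, hk, hkI⟩ := isPDrazinInvMod_iff.1 hc
  refine isPDrazinInvMod_iff.2 ⟨?_, k, hk, ?_⟩
  · linear_combination (((1 - a * ad) + a ^ 2 * ad * c) * (a * b * c - b) +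
      (a - a ^ 2 * c) * (1 - c * (a + b))) * had + (a ^ 2 * ad) * hcsc
  · have hpow : (1 + ad * b) ^ k * (a * ad) = ad ^ k * (a + b) ^ k * (a * ad) := by
      rw [← mul_pow]
      exact pow_mul_eq_pow_mul_of_mul_eq (by linear_combination (-a) * had) k
    have : (1 + ad * b) ^ k * (1 - (1 + ad * b) * ((1 - a * ad) + a ^ 2 * ad * c)) =
        ad ^ k * (a * ad) * ((a + b) ^ k * (1 - (a + b) * c)) := by
      linear_combination (1 - c * (a + b)) * hpow - ((1 + ad * b) ^ k * (a * b * c - b)) * had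
    rw [this]
    exact I.mul_mem_left _ hkI

theorem IsPDrazinInvMod.exists_add_of_one_add_mul (hI : I ≤ Ring.jacobson R) {a ad b bd h : R}
    (ha : IsPDrazinInvMod I a ad) (hb : IsPDrazinInvMod I b bd)
    (hh : IsPDrazinInvMod I (1 + ad * b) h) : ∃ w, IsPDrazinInvMod I (a + b) w := by
  have had := ha.2.1
  have hbdb := hb.2.1
  have hhfh := hh.2.1
  obtain ⟨ka, hka⟩ := ha.exists_forall_pow_mul_mem
  obtain ⟨kb, hkb⟩ := hb.exists_forall_pow_mul_mem
  obtain ⟨kh, hkh⟩ := hh.exists_forall_pow_mul_mem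
  have hpa := ha.isIdempotentElem_one_sub_mul
  have hqb := hb.isIdempotentElem_one_sub_mul
  obtain ⟨τ, hτ⟩ : ∃ τ, (1 + a * (1 - a * ad) * bd) * τ = 1 := by
    refine (isUnit_one_add_of_pow_mem hI (n := ka + 1) ?_).exists_right_inv
    rw [mul_pow, mul_pow, hpa.pow_succ_eq]
    convert I.mul_mem_right (a * bd ^ (ka + 1)) (hka ka le_rfl) using 1
    ring
  refine ⟨a * ad * h * ad + bd * (1 - a * ad) * τ,
    isPDrazinInvMod_iff.2 ⟨?_, ka + kb + 1 + kh, by omega, ?_⟩⟩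
  · linear_combination
      ((a * ad * h * ad + bd * (1 - a * ad) * τ) * (a * h - a ^ 2 * bd * τ) +
        a * bd * τ * (1 - (1 + ad * b) * h) + a * ad * h * (1 - b * bd) * τ) * had
      + ((a * ad * h * ad + bd * (1 - a * ad) * τ) * (1 - a * ad)) * hτ
      + ((a * ad) ^ 2 * ad) * hhfh + ((1 - a * ad) ^ 2 * τ ^ 2) * hbdb
  · set k := ka + kb + 1 + kh
    have hpow : (a + b) ^ k * (a * ad) = a ^ k * (1 + ad * b) ^ k * (a * ad) := by
      rw [← mul_pow]
      exact pow_mul_eq_pow_mul_of_mul_eq (by linear_combination (-(a * b)) * had) k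
    have : (a + b) ^ k * (1 - (a + b) * (a * ad * h * ad + bd * (1 - a * ad) * τ)) =
        a ^ k * (a * ad) * ((1 + ad * b) ^ k * (1 - (1 + ad * b) * h)) +
          (a + b) ^ kh * τ * ((a + b) ^ (ka + kb + 1) * ((1 - a * ad) * (1 - b * bd))) := by
      linear_combination (1 - (1 + ad * b) * h) * hpow
        - (a + b) ^ k * ((a * h - a ^ 2 * bd * τ) * had + (1 - a * ad) * hτ)
    rw [this]
    exact add_mem (I.mul_mem_left _ (hkh k (by omega))) (I.mul_mem_left _
      (add_pow_mul_mem_of_pow_mul_mem hpa hqb (hka ka le_rfl) (hkb kb le_rfl)))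

end Commutative

theorem IsPDrazinInv.commute_of_commute_mul {A : Type*} [Ring A] {a d x : A}
    (h : IsPDrazinInv a d) (hx : Commute a x) (hex : Commute (a * d) x) : Commute d x := by
  obtain ⟨had, hdad, -⟩ := h
  calc d * x = d * (a * d * x) := by rw [← mul_assoc, ← mul_assoc, hdad]
    _ = d * (x * a) * d := by rw [hex.eq]; simp only [mul_assoc]
    _ = d * a * x * d := by rw [← hx.eq]; simp only [mul_assoc]
    _ = x * d := by rw [← had, hex.eq, mul_assoc, had, hdad]

theorem eq_pow_mul_mul_pow_of_eq_mul_mul {M : Type*} [Monoid M] {x y u : M} (h : u = x * u * y)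
    (n : ℕ) : u = x ^ n * u * y ^ n := by
  induction n with
  | zero => simp
  | succ n ih =>
    calc u = x ^ n * (x * u * y) * y ^ n := by rw [← h, ← ih]
      _ = x ^ (n + 1) * u * y ^ (n + 1) := by rw [pow_succ x, pow_succ' y]; simp only [mul_assoc]

theorem spectralRadius_eq_zero_of_memJacobson {𝕜 R : Type*} [NormedField 𝕜] [Ring R]
    [Algebra 𝕜 R] {j : R} (hj : MemJacobson j) : spectralRadius 𝕜 j = 0 := by
  refine le_antisymm (iSup₂_le fun k hk => ?_) zero_le
  suffices k = 0 by simp [this]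
  by_contra hk0
  refine (spectrum.mem_iff.1 hk) ?_
  have e : algebraMap 𝕜 R k - j = k • (1 - (k⁻¹ • (1 : R)) * j) := by
    rw [smul_sub, Algebra.algebraMap_eq_smul_one, smul_mul_assoc, smul_smul,
      mul_inv_cancel₀ hk0, one_smul, one_mul]
  rw [e]
  exact (hj _).smul (Units.mk0 k hk0)

section BanachAlgebra

open Filter Topology ENNReal NNReal

variable {A : Type*} [NormedRing A] [NormedAlgebra ℂ A] [CompleteSpace A]

theorem eq_zero_of_forall_nnnorm_le {j u : A} (hj : spectralRadius ℂ j = 0) (r : ℝ≥0)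
    (h : ∀ n : ℕ, 0 < n → ‖u‖₊ ≤ ‖j ^ n‖₊ * r ^ n * ‖u‖₊) : u = 0 := by
  have hlim : Tendsto (fun n : ℕ => (‖j ^ n‖₊ : ℝ≥0∞) ^ (1 / n : ℝ) * r) atTop (𝓝 0) := by
    simpa [hj] using ENNReal.Tendsto.mul_const
      (spectrum.pow_nnnorm_pow_one_div_tendsto_nhds_spectralRadius j) (Or.inr coe_ne_top)
  obtain ⟨n, hn, hn1⟩ :=
    ((hlim.eventually (gt_mem_nhds zero_lt_one)).and (eventually_ge_atTop 1)).exists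
  have hlt : ‖j ^ n‖₊ * r ^ n < 1 := by
    have : (‖j ^ n‖₊ : ℝ≥0∞) * r ^ n < 1 := by
      rw [← ENNReal.rpow_lt_rpow_iff (z := (n : ℝ)⁻¹) (by positivity),
        ENNReal.mul_rpow_of_nonneg _ _ (by positivity), ENNReal.pow_rpow_inv_natCast (by omega),
        ENNReal.one_rpow]
      simpa [one_div] using hn
    exact_mod_cast this
  by_contra hu
  exact (h n hn1).not_gt (mul_lt_of_lt_one_left (nnnorm_pos.2 hu) hlt)

theorem eq_zero_of_eq_mul_mul_left {j u y : A} (hj : spectralRadius ℂ j = 0)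
    (h : u = j * u * y) : u = 0 :=
  eq_zero_of_forall_nnnorm_le hj ‖y‖₊ fun n hn =>
    calc ‖u‖₊ = ‖j ^ n * u * y ^ n‖₊ := by rw [← eq_pow_mul_mul_pow_of_eq_mul_mul h]
      _ ≤ ‖j ^ n‖₊ * ‖u‖₊ * ‖y ^ n‖₊ := nnnorm_mul₃_le
      _ ≤ ‖j ^ n‖₊ * ‖u‖₊ * ‖y‖₊ ^ n := by gcongr; exact nnnorm_pow_le' y hn
      _ = ‖j ^ n‖₊ * ‖y‖₊ ^ n * ‖u‖₊ := by ring

theorem eq_zero_of_eq_mul_mul_right {j u y : A} (hj : spectralRadius ℂ j = 0)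
    (h : u = y * u * j) : u = 0 :=
  eq_zero_of_forall_nnnorm_le hj ‖y‖₊ fun n hn =>
    calc ‖u‖₊ = ‖y ^ n * u * j ^ n‖₊ := by rw [← eq_pow_mul_mul_pow_of_eq_mul_mul h]
      _ ≤ ‖y ^ n‖₊ * ‖u‖₊ * ‖j ^ n‖₊ := nnnorm_mul₃_le
      _ ≤ ‖y‖₊ ^ n * ‖u‖₊ * ‖j ^ n‖₊ := by gcongr; exact nnnorm_pow_le' y hn
      _ = ‖j ^ n‖₊ * ‖y‖₊ ^ n * ‖u‖₊ := by ring

theorem IsPDrazinInv.commute_mul {a d x : A} (h : IsPDrazinInv a d) (hx : Commute a x) :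
    Commute (a * d) x := by
  obtain ⟨had, hdad, k, hk, hj⟩ := h
  replace had : Commute a d := had
  have hr := spectralRadius_eq_zero_of_memJacobson (𝕜 := ℂ) hj
  obtain ⟨e, he_def⟩ : ∃ e, a * d = e := ⟨_, rfl⟩
  have he : e * e = e := by rw [← he_def, ← mul_assoc, mul_assoc a, mul_assoc a, hdad]
  have hae : Commute a e := he_def ▸ (Commute.refl a).mul_right had
  have hadk : a ^ k * d ^ k = e := by
    rw [← had.mul_pow, he_def, IsIdempotentElem.pow_eq he (by omega)]
  have hdak : d ^ k * a ^ k = e := by rw [← (had.pow_pow k k).eq, hadk]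
  have hj' : a ^ k - a ^ (k + 1) * d = a ^ k * (1 - e) := by
    rw [← he_def, pow_succ, mul_sub, mul_one, mul_assoc]
  have hpe : IsIdempotentElem (1 - e) := IsIdempotentElem.one_sub he
  have hape : Commute a (1 - e) := (Commute.one_right a).sub_right hae
  have hu : (1 - e) * x * e = 0 := by
    have hau : Commute (a ^ k) ((1 - e) * x * e) :=
      ((hape.mul_right hx).mul_right hae).pow_left k
    have hpu : (1 - e) * ((1 - e) * x * e) = (1 - e) * x * e := by
      rw [← mul_assoc, ← mul_assoc, hpe.eq]
    have hue : (1 - e) * x * e * e = (1 - e) * x * e := by rw [mul_assoc _ e, he]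
    generalize (1 - e) * x * e = u at hau hpu hue ⊢
    refine eq_zero_of_eq_mul_mul_left hr (y := d ^ k) ?_
    calc u = u * (a ^ k * d ^ k) := by rw [hadk, hue]
      _ = a ^ k * ((1 - e) * u) * d ^ k := by rw [hpu, ← mul_assoc, hau.eq]
      _ = _ := by rw [hj']; simp only [mul_assoc]
  have hv : e * x * (1 - e) = 0 := by
    have hav : Commute (a ^ k) (e * x * (1 - e)) :=
      ((hae.mul_right hx).mul_right hape).pow_left k
    have hvp : e * x * (1 - e) * (1 - e) = e * x * (1 - e) := by
      rw [mul_assoc _ (1 - e), hpe.eq]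
    have hev : e * (e * x * (1 - e)) = e * x * (1 - e) := by rw [← mul_assoc, ← mul_assoc, he]
    generalize e * x * (1 - e) = v at hav hvp hev ⊢
    refine eq_zero_of_eq_mul_mul_right hr (y := d ^ k) ?_
    calc v = d ^ k * a ^ k * v := by rw [hdak, hev]
      _ = d ^ k * (v * (1 - e)) * a ^ k := by rw [hvp, mul_assoc, hav.eq, ← mul_assoc]
      _ = d ^ k * v * ((1 - e) * a ^ k) := by simp only [mul_assoc]
      _ = _ := by rw [hj', (hape.pow_left k).eq]
  rw [sub_mul, sub_mul, one_mul, sub_eq_zero] at hu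
  rw [mul_sub, mul_one, sub_eq_zero] at hv
  rw [he_def]
  exact hv.trans hu.symm

theorem IsPDrazinInv.commute {a d x : A} (h : IsPDrazinInv a d) (hx : Commute a x) :
    Commute d x :=
  h.commute_of_commute_mul hx (h.commute_mul hx)

theorem IsPDrazinInv.mem_centralizer_centralizer {S : Set A} {a d : A} (h : IsPDrazinInv a d)
    (ha : a ∈ Set.centralizer (Set.centralizer S)) : d ∈ Set.centralizer (Set.centralizer S) :=
  fun x hx => (h.commute (ha x hx).symm).eq.symm

theorem IsPDrazinInv.one_add_mul_of_add {a ad b c : A} (ha : IsPDrazinInv a ad)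
    (hab : Commute a b) (hc : IsPDrazinInv (a + b) c) :
    IsPDrazinInv (1 + ad * b) ((1 - a * ad) + a ^ 2 * ad * c) := by
  let C := Subring.centralizer (Set.centralizer ({a, b} : Set A))
  let _ : CommRing C :=
    centralizerCentralizerCommRing (Set.pairwise_pair.2 fun _ => ⟨hab, hab.symm⟩)
  have ma : a ∈ C := Set.subset_centralizer_centralizer (by simp)
  have mb : b ∈ C := Set.subset_centralizer_centralizer (by simp)
  have md : ad ∈ C := ha.mem_centralizer_centralizer ma
  have mc : c ∈ C := hc.mem_centralizer_centralizer (C.add_mem ma mb)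
  exact isPDrazinInv_coe_iff.2 <| IsPDrazinInvMod.one_add_mul_of_add
    (a := ⟨a, ma⟩) (ad := ⟨ad, md⟩) (b := ⟨b, mb⟩) (c := ⟨c, mc⟩) (Subtype.ext ha.2.1)
    (isPDrazinInv_coe_iff.1 hc)

theorem IsPDrazinInv.exists_add_of_one_add_mul {a ad b bd h : A} (ha : IsPDrazinInv a ad)
    (hb : IsPDrazinInv b bd) (hab : Commute a b) (hh : IsPDrazinInv (1 + ad * b) h) :
    ∃ w, IsPDrazinInv (a + b) w := by
  let C := Subring.centralizer (Set.centralizer ({a, b} : Set A))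
  let _ : CommRing C :=
    centralizerCentralizerCommRing (Set.pairwise_pair.2 fun _ => ⟨hab, hab.symm⟩)
  have ma : a ∈ C := Set.subset_centralizer_centralizer (by simp)
  have mb : b ∈ C := Set.subset_centralizer_centralizer (by simp)
  have md : ad ∈ C := ha.mem_centralizer_centralizer ma
  have mbd : bd ∈ C := hb.mem_centralizer_centralizer mb
  have mh : h ∈ C := hh.mem_centralizer_centralizer (C.add_mem C.one_mem (C.mul_mem md mb))
  obtain ⟨w, hw⟩ := IsPDrazinInvMod.exists_add_of_one_add_mul (R := C)
    (comap_jacobson_le_jacobson_centralizer _) (a := ⟨a, ma⟩) (ad := ⟨ad, md⟩) (b := ⟨b, mb⟩)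
    (bd := ⟨bd, mbd⟩) (h := ⟨h, mh⟩) (isPDrazinInv_coe_iff.1 ha) (isPDrazinInv_coe_iff.1 hb)
    (isPDrazinInv_coe_iff.1 hh)
  exact ⟨w, isPDrazinInv_coe_iff.2 hw⟩

end BanachAlgebra

theorem stmt7 {A : Type*} [NormedRing A] [NormedAlgebra ℂ A] [CompleteSpace A]
    (a ad b bd : A) (ha : IsPDrazinInv a ad) (hb : IsPDrazinInv b bd)
    (hcomm : a * b = b * a) :
    ((∃ c, IsPDrazinInv (a + b) c) ↔ (∃ c, IsPDrazinInv (1 + ad * b) c)) ∧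
      (∀ c, IsPDrazinInv (a + b) c →
        IsPDrazinInv (1 + ad * b) ((1 - a * ad) + a ^ 2 * ad * c)) :=
  ⟨⟨fun ⟨_, hc⟩ => ⟨_, ha.one_add_mul_of_add hcomm hc⟩,
      fun ⟨_, hh⟩ => ha.exists_add_of_one_add_mul hb hcomm hh⟩,
    fun _ hc => ha.one_add_mul_of_add hcomm hc⟩
end

section
/- Let a, b be pseudo Drazin invertible elements of a Banach algebra A with ab = λ ba for some nonzero complex number λ. Then a a^‡ b = b a a^‡, i.e., the idempotent a a^‡ commutes with b. -/
open Filter Topology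

section Spectrum

variable {𝕜 A : Type*} [Field 𝕜] [Ring A] [Algebra 𝕜 A]

theorem spectrum_subset_zero_of_memJacobson {j : A} (hj : MemJacobson j) :
    spectrum 𝕜 j ⊆ {0} := by
  intro μ hμ
  by_contra hμ0
  apply spectrum.mem_iff.mp hμ
  have hunit : IsUnit (algebraMap 𝕜 A μ) := (isUnit_iff_ne_zero.mpr hμ0).map _
  have hfactor : algebraMap 𝕜 A μ - j = algebraMap 𝕜 A μ * (1 - algebraMap 𝕜 A μ⁻¹ * j) := by
    rw [mul_sub, mul_one, ← mul_assoc, ← map_mul, mul_inv_cancel₀ hμ0, map_one, one_mul]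
  rw [hfactor]
  exact hunit.mul (hj _)

theorem spectrum_subset_zero_of_memJacobson_pow {c : A} {k : ℕ} (hk : k ≠ 0)
    (hc : MemJacobson (c ^ k)) : spectrum 𝕜 c ⊆ {0} := by
  intro μ hμ
  have hμk : μ ^ k ∈ spectrum 𝕜 (c ^ k) := spectrum.pow_image_subset c k ⟨μ, hμ, rfl⟩
  exact pow_eq_zero_iff hk |>.mp (spectrum_subset_zero_of_memJacobson hc hμk)

end Spectrum

theorem spectralRadius_eq_zero_of_spectrum_subset_zero {𝕜 A : Type*} [NormedField 𝕜] [Ring A]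
    [Algebra 𝕜 A] {c : A} (hc : spectrum 𝕜 c ⊆ {0}) : spectralRadius 𝕜 c = 0 :=
  le_antisymm (iSup₂_le fun μ hμ => by simp [Set.mem_singleton_iff.mp (hc hμ)]) zero_le

theorem pow_mul_eq_smul_mul_pow {S R : Type*} [CommSemiring S] [Semiring R] [Algebra S R]
    {a b : R} {r : S} (h : a * b = r • (b * a)) (n : ℕ) : a ^ n * b = r ^ n • (b * a ^ n) := by
  induction n with
  | zero => simp
  | succ n ih =>
    calc a ^ (n + 1) * b = a ^ n * (a * b) := by rw [pow_succ, mul_assoc]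
      _ = r • ((a ^ n * b) * a) := by rw [h, mul_smul_comm, mul_assoc]
      _ = r ^ (n + 1) • (b * a ^ (n + 1)) := by
        rw [ih, smul_mul_assoc, smul_smul, mul_assoc, ← pow_succ, ← pow_succ']

theorem mul_pow_eq_inv_pow_smul_pow_mul {S R : Type*} [Field S] [Semiring R] [Algebra S R]
    {a b : R} {r : S} (hr : r ≠ 0) (h : a * b = r • (b * a)) (n : ℕ) :
    b * a ^ n = (r ^ n)⁻¹ • (a ^ n * b) := by
  rw [pow_mul_eq_smul_mul_pow h n, inv_smul_smul₀ (pow_ne_zero n hr)]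

theorem tendsto_nhds_zero_of_rpow_one_div_tendsto_lt_one {u : ℕ → ℝ} (hu : ∀ n, 0 ≤ u n)
    {l : ℝ} (hl : Tendsto (fun n : ℕ => u n ^ (1 / (n : ℝ))) atTop (𝓝 l)) (hl1 : l < 1) :
    Tendsto u atTop (𝓝 0) := by
  obtain ⟨q, hlq, hq1⟩ := exists_between hl1
  have hq0 : 0 ≤ q := (ge_of_tendsto' hl fun n => Real.rpow_nonneg (hu n) _).trans hlq.le
  have hle : ∀ᶠ n in atTop, u n ≤ q ^ n := by
    filter_upwards [hl.eventually (gt_mem_nhds hlq), eventually_ne_atTop 0] with n hn hn0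
    calc u n = (u n ^ (1 / (n : ℝ))) ^ n := by
          rw [← Real.rpow_natCast, ← Real.rpow_mul (hu n),
            one_div_mul_cancel (Nat.cast_ne_zero.mpr hn0), Real.rpow_one]
      _ ≤ q ^ n := pow_le_pow_left₀ (Real.rpow_nonneg (hu n) _) hn.le n
  exact squeeze_zero' (Eventually.of_forall hu) hle (tendsto_pow_atTop_nhds_zero_of_lt_one hq0 hq1)

section NormedAlgebra

variable {A : Type*} [NormedRing A] [NormedAlgebra ℂ A]

theorem norm_smul_pow_mul_mul_pow_le (μ : ℂ) (x y c : A) {n : ℕ} (hn : n ≠ 0) :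
    ‖μ ^ n • (x ^ n * y * c ^ n)‖ ≤ ‖y‖ * ((‖μ‖ * ‖x‖) ^ n * ‖c ^ n‖) :=
  calc ‖μ ^ n • (x ^ n * y * c ^ n)‖ ≤ ‖μ‖ ^ n * (‖x ^ n‖ * ‖y‖ * ‖c ^ n‖) := by
        rw [norm_smul, norm_pow]; gcongr; exact norm_mul₃_le
    _ ≤ ‖μ‖ ^ n * (‖x‖ ^ n * ‖y‖ * ‖c ^ n‖) := by gcongr; exact norm_pow_le' x (by omega)
    _ = ‖y‖ * ((‖μ‖ * ‖x‖) ^ n * ‖c ^ n‖) := by ring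

theorem norm_smul_pow_mul_mul_pow_le' (μ : ℂ) (x y c : A) {n : ℕ} (hn : n ≠ 0) :
    ‖μ ^ n • (c ^ n * y * x ^ n)‖ ≤ ‖y‖ * ((‖μ‖ * ‖x‖) ^ n * ‖c ^ n‖) :=
  calc ‖μ ^ n • (c ^ n * y * x ^ n)‖ ≤ ‖μ‖ ^ n * (‖c ^ n‖ * ‖y‖ * ‖x ^ n‖) := by
        rw [norm_smul, norm_pow]; gcongr; exact norm_mul₃_le
    _ ≤ ‖μ‖ ^ n * (‖c ^ n‖ * ‖y‖ * ‖x‖ ^ n) := by gcongr; exact norm_pow_le' x (by omega)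
    _ = ‖y‖ * ((‖μ‖ * ‖x‖) ^ n * ‖c ^ n‖) := by ring

variable [CompleteSpace A]

theorem tendsto_norm_pow_rpow_one_div_of_spectralRadius_eq_zero {c : A}
    (hc : spectralRadius ℂ c = 0) :
    Tendsto (fun n : ℕ => ‖c ^ n‖ ^ (1 / (n : ℝ))) atTop (𝓝 0) := by
  have hgelfand := spectrum.pow_norm_pow_one_div_tendsto_nhds_spectralRadius c
  rw [hc] at hgelfand
  refine ((ENNReal.tendsto_toReal ENNReal.zero_ne_top).comp hgelfand).congr fun n => ?_
  exact ENNReal.toReal_ofReal (Real.rpow_nonneg (norm_nonneg _) _)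

theorem tendsto_pow_mul_norm_pow_of_spectralRadius_eq_zero {c : A}
    (hc : spectralRadius ℂ c = 0) {r : ℝ} (hr : 0 ≤ r) :
    Tendsto (fun n : ℕ => r ^ n * ‖c ^ n‖) atTop (𝓝 0) := by
  refine tendsto_nhds_zero_of_rpow_one_div_tendsto_lt_one (fun n => by positivity)
    (l := r * 0) ?_ (by simp)
  refine ((tendsto_norm_pow_rpow_one_div_of_spectralRadius_eq_zero hc).const_mul r).congr' ?_
  filter_upwards [eventually_ne_atTop 0] with n hn
  rw [Real.mul_rpow (by positivity) (norm_nonneg _), one_div, Real.pow_rpow_inv_natCast hr hn]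

theorem tendsto_nhds_zero_of_norm_le_pow_mul_norm_pow {c : A} (hc : spectralRadius ℂ c = 0)
    {f : ℕ → A} {C r : ℝ} (hr : 0 ≤ r) (hf : ∀ᶠ n in atTop, ‖f n‖ ≤ C * (r ^ n * ‖c ^ n‖)) :
    Tendsto f atTop (𝓝 0) := by
  refine squeeze_zero_norm' hf ?_
  simpa using (tendsto_pow_mul_norm_pow_of_spectralRadius_eq_zero hc hr).const_mul C

end NormedAlgebra

namespace IsPDrazinInv

section Ring

variable {R : Type*} [Ring R] {a ad : R}

theorem commute_s12 (h : IsPDrazinInv a ad) : Commute a ad := h.1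

theorem isIdempotentElem (h : IsPDrazinInv a ad) : IsIdempotentElem (a * ad) := by
  rw [IsIdempotentElem, mul_assoc, ← mul_assoc ad, h.2.1]

theorem pow_mul_pow (h : IsPDrazinInv a ad) {n : ℕ} (hn : n ≠ 0) : a ^ n * ad ^ n = a * ad := by
  rw [← h.commute_s12.mul_pow, h.isIdempotentElem.pow_eq hn]

theorem pow_mul_pow' (h : IsPDrazinInv a ad) {n : ℕ} (hn : n ≠ 0) : ad ^ n * a ^ n = a * ad := by
  rw [← h.commute_s12.symm.mul_pow, ← h.commute_s12.eq, h.isIdempotentElem.pow_eq hn]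

theorem commute_one_sub (h : IsPDrazinInv a ad) : Commute a (1 - a * ad) :=
  (Commute.one_right a).sub_right ((Commute.refl a).mul_right h.commute_s12)

theorem mul_one_sub_pow (h : IsPDrazinInv a ad) {n : ℕ} (hn : n ≠ 0) :
    (a * (1 - a * ad)) ^ n = a ^ n * (1 - a * ad) := by
  rw [h.commute_one_sub.mul_pow, h.isIdempotentElem.one_sub.pow_eq hn]

theorem memJacobson_mul_one_sub_pow (h : IsPDrazinInv a ad) :
    ∃ k ≠ 0, MemJacobson ((a * (1 - a * ad)) ^ k) := by
  obtain ⟨k, hk, hJ⟩ := h.2.2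
  refine ⟨k, by omega, ?_⟩
  rwa [h.mul_one_sub_pow (by omega), mul_sub, mul_one, ← mul_assoc, ← pow_succ]

theorem spectralRadius_mul_one_sub_eq_zero {𝕜 : Type*} [NormedField 𝕜] [Algebra 𝕜 R]
    (h : IsPDrazinInv a ad) : spectralRadius 𝕜 (a * (1 - a * ad)) = 0 := by
  obtain ⟨k, hk, hJ⟩ := h.memJacobson_mul_one_sub_pow
  exact spectralRadius_eq_zero_of_spectrum_subset_zero
    (spectrum_subset_zero_of_memJacobson_pow hk hJ)

end Ring

variable {A : Type*} [NormedRing A] [NormedAlgebra ℂ A] [CompleteSpace A] {a ad b : A} {lam : ℂ}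

theorem mul_mul_one_sub_eq_zero (ha : IsPDrazinInv a ad) (h : a * b = lam • (b * a)) :
    a * ad * b * (1 - a * ad) = 0 := by
  set c := a * (1 - a * ad)
  have hsmall : Tendsto (fun n => lam ^ n • (ad ^ n * b * c ^ n)) atTop (𝓝 0) :=
    tendsto_nhds_zero_of_norm_le_pow_mul_norm_pow ha.spectralRadius_mul_one_sub_eq_zero
      (by positivity)
      ((eventually_ne_atTop 0).mono fun n hn => norm_smul_pow_mul_mul_pow_le lam ad b c hn)
  refine tendsto_nhds_unique
    (tendsto_const_nhds.congr' ((eventually_ne_atTop 0).mono fun n hn => ?_)) hsmall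
  calc a * ad * b * (1 - a * ad) = ad ^ n * (a ^ n * b) * (1 - a * ad) := by
        rw [← mul_assoc (ad ^ n), ha.pow_mul_pow' hn]
    _ = lam ^ n • (ad ^ n * b * c ^ n) := by
        rw [pow_mul_eq_smul_mul_pow h, ha.mul_one_sub_pow hn, mul_smul_comm, smul_mul_assoc]
        simp only [mul_assoc]

theorem one_sub_mul_mul_eq_zero (ha : IsPDrazinInv a ad) (hlam : lam ≠ 0)
    (h : a * b = lam • (b * a)) : (1 - a * ad) * b * (a * ad) = 0 := by
  set c := a * (1 - a * ad)
  have hsmall : Tendsto (fun n => lam⁻¹ ^ n • (c ^ n * b * ad ^ n)) atTop (𝓝 0) :=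
    tendsto_nhds_zero_of_norm_le_pow_mul_norm_pow ha.spectralRadius_mul_one_sub_eq_zero
      (by positivity)
      ((eventually_ne_atTop 0).mono fun n hn => norm_smul_pow_mul_mul_pow_le' lam⁻¹ ad b c hn)
  refine tendsto_nhds_unique
    (tendsto_const_nhds.congr' ((eventually_ne_atTop 0).mono fun n hn => ?_)) hsmall
  calc (1 - a * ad) * b * (a * ad) = (1 - a * ad) * (b * a ^ n) * ad ^ n := by
        simp only [mul_assoc, ha.pow_mul_pow hn]
    _ = lam⁻¹ ^ n • (c ^ n * b * ad ^ n) := by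
        rw [mul_pow_eq_inv_pow_smul_pow_mul hlam h, inv_pow, mul_smul_comm, smul_mul_assoc,
          ← mul_assoc (1 - a * ad), ← (ha.commute_one_sub.pow_left n).eq, ← ha.mul_one_sub_pow hn]

end IsPDrazinInv

theorem stmt12_general {A : Type*} [NormedRing A] [NormedAlgebra ℂ A] [CompleteSpace A]
    (a ad b : A) (ha : IsPDrazinInv a ad)
    (lam : ℂ) (hlam : lam ≠ 0) (h : a * b = lam • (b * a)) :
    a * ad * b = b * (a * ad) := by
  have hleft := ha.mul_mul_one_sub_eq_zero h
  have hright := ha.one_sub_mul_mul_eq_zero hlam h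
  rw [mul_sub, mul_one, sub_eq_zero] at hleft
  rw [sub_mul, sub_mul, one_mul, sub_eq_zero] at hright
  rw [hleft, hright]

theorem stmt12 {A : Type*} [NormedRing A] [NormedAlgebra ℂ A] [CompleteSpace A]
    (a ad b bd : A) (ha : IsPDrazinInv a ad) (hb : IsPDrazinInv b bd)
    (lam : ℂ) (hlam : lam ≠ 0) (h : a * b = lam • (b * a)) :
    a * ad * b = b * (a * ad) :=
  stmt12_general a ad b ha lam hlam h
end

section
/- Let a, b be pseudo Drazin invertible elements of a Banach algebra with ab = λ ba, λ ≠ 0, and let a^Π = 1 − a a^‡. Then 1 + b^‡ a a^Π is invertible in A, with inverse given by the norm-convergent series Σ_{i=0}^∞ (−b^‡ a a^Π)^i. -/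
/-!
Modulo the Jacobson radical `J`, a pseudo Drazin inverse becomes an honest Drazin inverse. There
the relation `a b = λ b a` passes to `b^‡ a = λ a b^‡`, and `b` (hence `b^‡`) commutes with the
idempotent `a a^‡`. So `b^‡` skew-commutes with the nilpotent element `a a^Π`, and their product
`q = b^‡ a a^Π` is nilpotent modulo `J`. An element some power of which lies in `J` has spectrum
`{0}`, so by Gelfand's formula the Neumann series `∑ (-q)^i` converges, to the inverse of `1 + q`.
-/

open Filter Ideal.Quotient

structure IsDrazinInv {R : Type*} [Monoid R] (a b : R) : Prop where
  commute : Commute a b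
  mul_mul_self : b * a * b = b
  exists_pow_succ_mul_eq_pow : ∃ k, a ^ (k + 1) * b = a ^ k

section SkewCommute

variable {𝕜 R : Type*} [Field 𝕜] [Semiring R] [Algebra 𝕜 R] {μ : 𝕜} {x y : R}

theorem mul_eq_inv_smul_of_mul_eq_smul (hμ : μ ≠ 0) (h : x * y = μ • (y * x)) :
    y * x = μ⁻¹ • (x * y) := by
  rw [h, inv_smul_smul₀ hμ]

theorem mul_pow_eq_smul_of_mul_eq_smul (h : x * y = μ • (y * x)) (n : ℕ) :
    x * y ^ n = μ ^ n • (y ^ n * x) := by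
  induction n with
  | zero => simp
  | succ n ih =>
    rw [pow_succ, ← mul_assoc, ih, smul_mul_assoc, mul_assoc, h, mul_smul_comm, smul_smul,
      ← pow_succ, ← mul_assoc, ← pow_succ]

theorem mul_pow_eq_smul_pow_mul_pow_of_mul_eq_smul (h : y * x = μ • (x * y)) (n : ℕ) :
    (x * y) ^ n = μ ^ n.choose 2 • (x ^ n * y ^ n) := by
  induction n with
  | zero => simp
  | succ n ih =>
    rw [pow_succ', ih, mul_smul_comm, mul_assoc, ← mul_assoc y, mul_pow_eq_smul_of_mul_eq_smul h,
      smul_mul_assoc, mul_smul_comm, smul_smul, Nat.choose_succ_succ, Nat.choose_one_right,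
      pow_add, pow_succ', pow_succ']
    simp only [mul_assoc, mul_comm (μ ^ n)]

theorem isNilpotent_mul_of_mul_eq_smul (h : y * x = μ • (x * y)) (hy : IsNilpotent y) :
    IsNilpotent (x * y) := by
  obtain ⟨n, hn⟩ := hy
  exact ⟨n, by rw [mul_pow_eq_smul_pow_mul_pow_of_mul_eq_smul h, hn, mul_zero, smul_zero]⟩

end SkewCommute

namespace IsDrazinInv

section Monoid

variable {R : Type*} [Monoid R] {a b : R}

theorem mul_mul_self_right (h : IsDrazinInv a b) : b * (a * b) = b := by
  rw [← mul_assoc, h.mul_mul_self]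

theorem mul_mul_self_left (h : IsDrazinInv a b) : a * b * b = b := by
  rw [h.commute.eq, h.mul_mul_self]

theorem commute_mul (h : IsDrazinInv a b) : Commute a (a * b) :=
  (Commute.refl a).mul_right h.commute

theorem isIdempotentElem_mul (h : IsDrazinInv a b) : IsIdempotentElem (a * b) := by
  rw [IsIdempotentElem, mul_assoc, h.mul_mul_self_right]

theorem pow_mul_pow {n : ℕ} (h : IsDrazinInv a b) (hn : n ≠ 0) : a ^ n * b ^ n = a * b := by
  obtain ⟨m, rfl⟩ := Nat.exists_eq_succ_of_ne_zero hn
  rw [← h.commute.mul_pow, h.isIdempotentElem_mul.pow_succ_eq]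

theorem exists_pow_mul_mul_eq_pow (h : IsDrazinInv a b) :
    ∃ n, n ≠ 0 ∧ a ^ n * (a * b) = a ^ n := by
  obtain ⟨k, hk⟩ := h.exists_pow_succ_mul_eq_pow
  refine ⟨k + 1, k.succ_ne_zero, ?_⟩
  rw [← mul_assoc, ← pow_succ, pow_succ', mul_assoc, hk, ← pow_succ']

end Monoid

section Algebra

variable {𝕜 R : Type*} [Field 𝕜] [Semiring R] [Algebra 𝕜 R] {μ : 𝕜} {a b x : R}

theorem commute_mul_of_mul_eq_smul (h : IsDrazinInv a b) (hμ : μ ≠ 0)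
    (hx : x * a = μ • (a * x)) : Commute x (a * b) := by
  obtain ⟨n, hn, han⟩ := h.exists_pow_mul_mul_eq_pow
  -- `a * b = a ^ n * b ^ n = b ^ n * a ^ n` absorbs `a ^ n` on either side, so it fixes
  -- `x * (a * b)` from the left and `a * b * x` from the right.
  have hna : a * b * a ^ n = a ^ n := by
    rw [← (h.commute_mul.pow_left n).eq, han]
  have hright : x * (a * b) = μ ^ n • (a ^ n * x * b ^ n) := by
    rw [← h.pow_mul_pow hn, ← mul_assoc, mul_pow_eq_smul_of_mul_eq_smul hx, smul_mul_assoc]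
  have hleft : a * b * x = (μ ^ n)⁻¹ • (b ^ n * x * a ^ n) := by
    rw [← h.pow_mul_pow hn, h.commute.pow_pow n n |>.eq, mul_assoc,
      mul_eq_inv_smul_of_mul_eq_smul (pow_ne_zero n hμ) (mul_pow_eq_smul_of_mul_eq_smul hx n),
      mul_smul_comm, mul_assoc]
  calc x * (a * b) = a * b * (x * (a * b)) := by
        rw [hright, mul_smul_comm, ← mul_assoc, ← mul_assoc, hna]
    _ = a * b * x * (a * b) := by simp only [mul_assoc]
    _ = a * b * x := by rw [hleft, smul_mul_assoc, mul_assoc _ (a ^ n), han]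

theorem mul_eq_smul_of_mul_eq_smul (h : IsDrazinInv a b) (hμ : μ ≠ 0)
    (hx : x * a = μ • (a * x)) : b * x = μ • (x * b) :=
  calc b * x = b * (x * (a * b)) := by
        rw [(h.commute_mul_of_mul_eq_smul hμ hx).eq, ← mul_assoc, h.mul_mul_self_right]
    _ = b * (x * a) * b := by simp only [mul_assoc]
    _ = μ • (b * a * x * b) := by
        rw [hx, mul_smul_comm, smul_mul_assoc]; simp only [mul_assoc]
    _ = μ • (a * b * x * b) := by rw [← h.commute.eq]
    _ = μ • (x * b) := by
        rw [← (h.commute_mul_of_mul_eq_smul hμ hx).eq, mul_assoc, h.mul_mul_self_left]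

end Algebra

theorem isNilpotent_mul_one_sub {R : Type*} [Ring R] {a b : R} (h : IsDrazinInv a b) :
    IsNilpotent (a * (1 - a * b)) := by
  obtain ⟨n, hn, han⟩ := h.exists_pow_mul_mul_eq_pow
  obtain ⟨m, rfl⟩ := Nat.exists_eq_succ_of_ne_zero hn
  refine ⟨m + 1, ?_⟩
  rw [((Commute.one_right a).sub_right h.commute_mul).mul_pow,
    h.isIdempotentElem_mul.one_sub.pow_succ_eq, mul_sub, mul_one, han, sub_self]

end IsDrazinInv

theorem memJacobson_iff_mem_jacobson {A : Type*} [Ring A] {x : A} :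
    MemJacobson x ↔ x ∈ Ring.jacobson A := by
  rw [← Ideal.jacobson_bot, Ideal.mem_jacobson_iff]
  simp only [Ideal.mem_bot, sub_eq_zero, mul_assoc, ← mul_add_one]
  have hneg (y : A) : y * x + 1 = 1 - -y * x := by noncomm_ring
  constructor
  · intro hx y
    obtain ⟨u, hu⟩ := hx (-y)
    exact ⟨↑u⁻¹, by rw [hneg, ← hu, Units.inv_mul]⟩
  · intro hx y
    obtain ⟨z, hz⟩ := hx (-y)
    -- `z` is a left inverse of `1 - y * x`, and itself has a left inverse `w`
    obtain ⟨w, hw⟩ := hx (z * y)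
    have hzw : z * y * x + 1 = z := by
      rw [← sub_eq_zero, ← hz]; noncomm_ring
    rw [hzw] at hw
    have hw' : w = 1 - y * x :=
      calc w = w * z * (-y * x + 1) := by rw [mul_assoc, hz, mul_one]
        _ = 1 - y * x := by rw [hw, one_mul]; noncomm_ring
    rw [hneg, neg_neg] at hz
    exact ⟨⟨1 - y * x, z, by rw [← hw', hw], hz⟩, rfl⟩

theorem IsPDrazinInv.isDrazinInv_mk {A : Type*} [Ring A] {a b : A} (h : IsPDrazinInv a b) :
    IsDrazinInv (mk (Ring.jacobson A) a) (mk (Ring.jacobson A) b) := by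
  obtain ⟨hc, hi, k, -, hk⟩ := h
  refine ⟨by simp only [Commute, SemiconjBy, ← map_mul, hc], by simp only [← map_mul, hi], k, ?_⟩
  rw [← map_pow, ← map_pow, ← map_mul, eq_comm, ← sub_eq_zero, ← map_sub, eq_zero_iff_mem]
  exact memJacobson_iff_mem_jacobson.mp hk

theorem spectrum_subset_zero_of_mem_jacobson {𝕜 A : Type*} [Field 𝕜] [Ring A] [Algebra 𝕜 A]
    {x : A} (hx : x ∈ Ring.jacobson A) : spectrum 𝕜 x ⊆ {0} := by
  intro z hz
  by_contra hz0
  refine spectrum.mem_iff.mp hz ?_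
  have h1 := memJacobson_iff_mem_jacobson.mpr hx (algebraMap 𝕜 A z⁻¹)
  have h2 : algebraMap 𝕜 A z - x = algebraMap 𝕜 A z * (1 - algebraMap 𝕜 A z⁻¹ * x) := by
    rw [mul_sub, mul_one, ← mul_assoc, ← map_mul, mul_inv_cancel₀ hz0, map_one, one_mul]
  rw [h2]
  exact ((Ne.isUnit hz0).map _).mul h1

theorem spectrum_subset_zero_of_isNilpotent_mk {𝕜 A : Type*} [Field 𝕜] [IsAlgClosed 𝕜] [Ring A]
    [Algebra 𝕜 A] {x : A} (hx : IsNilpotent (mk (Ring.jacobson A) x)) : spectrum 𝕜 x ⊆ {0} := by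
  obtain ⟨n, hn⟩ := hx
  have hn' : mk (Ring.jacobson A) (x ^ (n + 1)) = 0 := by rw [map_pow, pow_succ, hn, zero_mul]
  intro z hz
  have hzn : z ^ (n + 1) ∈ spectrum 𝕜 (x ^ (n + 1)) := by
    rw [spectrum.map_pow_of_pos x n.succ_pos]; exact Set.mem_image_of_mem _ hz
  exact pow_eq_zero_iff n.succ_ne_zero |>.mp
    (spectrum_subset_zero_of_mem_jacobson (eq_zero_iff_mem.mp hn') hzn)

theorem summable_pow_of_spectralRadius_lt_one {A : Type*} [NormedRing A] [NormedAlgebra ℂ A]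
    [CompleteSpace A] {x : A} (hx : spectralRadius ℂ x < 1) : Summable (x ^ ·) := by
  obtain ⟨r, hxr, hr1⟩ := ENNReal.lt_iff_exists_nnreal_btwn.mp hx
  have hroot := (spectrum.pow_nnnorm_pow_one_div_tendsto_nhds_spectralRadius x).eventually
    (gt_mem_nhds hxr)
  refine .of_norm_bounded_eventually_nat
    (summable_geometric_of_lt_one r.2 (mod_cast hr1 : (r : ℝ) < 1)) ?_
  filter_upwards [hroot, eventually_ne_atTop 0] with n hn hn0
  have hpos : (0 : ℝ) < n := Nat.cast_pos.mpr (Nat.pos_of_ne_zero hn0)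
  rw [← ENNReal.coe_rpow_of_nonneg _ (one_div_nonneg.mpr hpos.le), ENNReal.coe_lt_coe, one_div,
    NNReal.rpow_inv_lt_iff hpos, NNReal.rpow_natCast] at hn
  exact_mod_cast hn.le

theorem summable_pow_of_isNilpotent_mk {A : Type*} [NormedRing A] [NormedAlgebra ℂ A]
    [CompleteSpace A] {x : A} (hx : IsNilpotent (mk (Ring.jacobson A) x)) :
    Summable (x ^ ·) := by
  refine summable_pow_of_spectralRadius_lt_one (lt_of_le_of_lt ?_ one_pos)
  refine iSup₂_le fun z hz => ?_
  rw [spectrum_subset_zero_of_isNilpotent_mk hx hz, nnnorm_zero, ENNReal.coe_zero]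

theorem stmt18 {A : Type*} [NormedRing A] [NormedAlgebra ℂ A] [CompleteSpace A]
    (a ad b bd : A) (ha : IsPDrazinInv a ad) (hb : IsPDrazinInv b bd)
    (lam : ℂ) (hlam : lam ≠ 0) (h : a * b = lam • (b * a)) :
    IsUnit (1 + bd * (a * (1 - a * ad))) ∧
      (1 + bd * (a * (1 - a * ad))) * (∑' i : ℕ, (-(bd * (a * (1 - a * ad)))) ^ i) = 1 ∧
      (∑' i : ℕ, (-(bd * (a * (1 - a * ad)))) ^ i) * (1 + bd * (a * (1 - a * ad))) = 1 := by
  set π := mk (Ring.jacobson A)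
  have hA := ha.isDrazinInv_mk
  have hB := hb.isDrazinInv_mk
  have hab : π a * π b = lam • (π b * π a) := by
    simpa using congrArg (mkₐ ℂ (Ring.jacobson A)) h
  have hb_idem : Commute (π b) (π a * π ad) :=
    hA.commute_mul_of_mul_eq_smul (inv_ne_zero hlam) (mul_eq_inv_smul_of_mul_eq_smul hlam hab)
  have hbd_a : π bd * π a = lam • (π a * π bd) := hB.mul_eq_smul_of_mul_eq_smul hlam hab
  have hbd_one_sub : Commute (π bd) (1 - π a * π ad) := by
    refine (Commute.one_right _).sub_right ?_
    have := hB.mul_eq_smul_of_mul_eq_smul (μ := (1 : ℂ)) (x := π a * π ad) one_ne_zero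
      (by rw [one_smul]; exact hb_idem.symm.eq)
    rwa [one_smul] at this
  have hbd_skew : π bd * (π a * (1 - π a * π ad)) = lam • (π a * (1 - π a * π ad) * π bd) := by
    rw [← mul_assoc, hbd_a, smul_mul_assoc, mul_assoc, hbd_one_sub.eq, ← mul_assoc]
  have hq : IsNilpotent (π (-(bd * (a * (1 - a * ad))))) := by
    simp only [map_neg, map_mul, map_sub, map_one]
    exact (isNilpotent_mul_of_mul_eq_smul (mul_eq_inv_smul_of_mul_eq_smul hlam hbd_skew)
      hA.isNilpotent_mul_one_sub).neg
  have hs := summable_pow_of_isNilpotent_mk hq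
  have hright := hs.one_sub_mul_tsum_pow
  have hleft := hs.tsum_pow_mul_one_sub
  rw [sub_neg_eq_add] at hright hleft
  exact ⟨⟨⟨_, _, hright, hleft⟩, rfl⟩, hright, hleft⟩
end

section
/- Let a be a pseudo Drazin invertible element of a Banach algebra, let b be any element with ab = λ ba for some λ ≠ 0, and let p = a a^‡. Then p b = p b p and b p = p b p, hence p b = b p. -/
open Filter Topology

lemma quasinil {A : Type*} [NormedRing A] [NormedAlgebra ℂ A] [CompleteSpace A]
    (x : A) (hx : MemJacobson x) :
    Tendsto (fun n : ℕ => ‖x ^ n‖ ^ (1 / n : ℝ)) atTop (𝓝 0) := by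
  have hσ : spectrum ℂ x ⊆ {0} := by
    intro z hz
    by_contra hz0
    have hz0 : z ≠ 0 := hz0
    have hu := hx ((z⁻¹ : ℂ) • 1)
    rw [smul_mul_assoc, one_mul] at hu
    have hzu : IsUnit (algebraMap ℂ A z) := (isUnit_iff_ne_zero.mpr hz0).map (algebraMap ℂ A)
    have := hzu.mul hu
    rw [mul_sub, mul_one, ← Algebra.smul_def, smul_smul, mul_inv_cancel₀ hz0, one_smul] at this
    exact spectrum.mem_iff.mp hz this
  have hrad : spectralRadius ℂ x = 0 := by
    rw [spectralRadius]
    refine le_antisymm (iSup₂_le fun z hz => ?_) zero_le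
    have : z = 0 := hσ hz
    simp [this]
  have hT := spectrum.pow_norm_pow_one_div_tendsto_nhds_spectralRadius x
  rw [hrad] at hT
  have hT2 := (ENNReal.tendsto_toReal ENNReal.zero_ne_top).comp hT
  simp only [Function.comp_def, ENNReal.toReal_ofReal
    (Real.rpow_nonneg (norm_nonneg _) _), ENNReal.toReal_zero] at hT2
  exact hT2

lemma quasinil' {A : Type*} [NormedRing A] [NormedAlgebra ℂ A] [CompleteSpace A]
    (x : A) (hx : MemJacobson x) {ε : ℝ} (hε : 0 < ε) :
    ∀ᶠ n : ℕ in atTop, ‖x ^ n‖ ≤ ε ^ n := by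
  filter_upwards [(quasinil x hx).eventually (gt_mem_nhds hε), eventually_ge_atTop 1]
    with n hn hn1
  have hncast : (n : ℝ) ≠ 0 := Nat.cast_ne_zero.mpr (by omega)
  have : ‖x ^ n‖ = (‖x ^ n‖ ^ (1 / n : ℝ)) ^ n := by
    rw [← Real.rpow_natCast (‖x ^ n‖ ^ (1 / n : ℝ)) n, ← Real.rpow_mul (norm_nonneg _),
      one_div_mul_cancel hncast, Real.rpow_one]
  rw [this]
  exact pow_le_pow_left₀ (Real.rpow_nonneg (norm_nonneg _) _) hn.le n

lemma vanish_aux {A : Type*} [NormedRing A] [NormedAlgebra ℂ A] [CompleteSpace A]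
    (x c : A) (hx : MemJacobson x) (C D : ℝ) (hC : 0 ≤ C) (hD : 0 ≤ D)
    (hb : ∀ n : ℕ, 1 ≤ n → ‖c‖ ≤ C ^ n * D * ‖x ^ n‖) : c = 0 := by
  have hε : (0:ℝ) < 1 / (2 * (C + 1)) := by positivity
  have hCε : C * (1 / (2 * (C + 1))) ≤ 1 / 2 := by
    rw [mul_one_div, div_le_div_iff₀ (by positivity) (by norm_num)]
    nlinarith
  have key : ∀ᶠ n : ℕ in atTop, ‖c‖ ≤ D * (1 / 2) ^ n := by
    filter_upwards [quasinil' x hx hε, eventually_ge_atTop 1] with n hn hn1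
    calc ‖c‖ ≤ C ^ n * D * ‖x ^ n‖ := hb n hn1
    _ ≤ C ^ n * D * (1 / (2 * (C + 1))) ^ n := by
        exact mul_le_mul_of_nonneg_left hn (by positivity)
    _ = D * (C * (1 / (2 * (C + 1)))) ^ n := by ring
    _ ≤ D * (1 / 2) ^ n := by
        exact mul_le_mul_of_nonneg_left (pow_le_pow_left₀ (by positivity) hCε n) hD
  have hlim : Tendsto (fun n : ℕ => D * (1 / 2) ^ n) atTop (𝓝 0) := by
    simpa using (tendsto_pow_atTop_nhds_zero_of_lt_one (by norm_num : (0:ℝ) ≤ 1/2)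
      (by norm_num)).const_mul D
  have : ‖c‖ ≤ 0 := ge_of_tendsto hlim key
  exact norm_le_zero_iff.mp this

lemma idem_pow {A : Type*} [Monoid A] {e : A} (he : e * e = e) :
    ∀ n : ℕ, 1 ≤ n → e ^ n = e := by
  intro n hn
  induction n with
  | zero => omega
  | succ m ih =>
    rcases Nat.eq_or_lt_of_le hn with h | h
    · simp [← h]
    · rw [pow_succ, ih (by omega), he]

theorem stmt19 {A : Type*} [NormedRing A] [NormedAlgebra ℂ A] [CompleteSpace A]
    (a ad b : A) (ha : IsPDrazinInv a ad)
    (lam : ℂ) (hlam : lam ≠ 0) (h : a * b = lam • (b * a)) :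
    (a * ad) * b = (a * ad) * b * (a * ad) ∧ b * (a * ad) = (a * ad) * b * (a * ad) ∧
      (a * ad) * b = b * (a * ad) := by
  obtain ⟨hc, h2, k, hk1, hJ⟩ := ha
  have hca : Commute a ad := hc
  have hpp : (a * ad) * (a * ad) = a * ad := by
    rw [mul_assoc, ← mul_assoc ad a ad, h2]
  have hpa : Commute a (a * ad) := (Commute.refl a).mul_right hca
  have hpm1 : ∀ m : ℕ, 1 ≤ m → ad ^ m * a ^ m = a * ad := by
    intro m hm
    rw [← (hca.symm).mul_pow, ← hc, idem_pow hpp m hm]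
  have hpm2 : ∀ m : ℕ, 1 ≤ m → a ^ m * ad ^ m = a * ad := by
    intro m hm
    rw [← hca.mul_pow, idem_pow hpp m hm]
  have hone : (1 - a * ad) * (1 - a * ad) = 1 - a * ad := by
    have e : (1 - a * ad) * (1 - a * ad)
        = 1 - (a * ad) - (a * ad) + (a * ad) * (a * ad) := by noncomm_ring
    rw [e, hpp]; abel
  have haone : Commute a (1 - a * ad) := (Commute.one_right a).sub_right hpa
  have hqm : ∀ m : ℕ, 1 ≤ m → (a * (1 - a * ad)) ^ m = a ^ m * (1 - a * ad) := by
    intro m hm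
    rw [haone.mul_pow, idem_pow hone m hm]
  have hqk : (a * (1 - a * ad)) ^ k = a ^ k - a ^ (k + 1) * ad := by
    rw [hqm k hk1, mul_sub, mul_one, ← mul_assoc, ← pow_succ]
  have hJq : MemJacobson ((a * (1 - a * ad)) ^ k) := hqk ▸ hJ
  have habn : ∀ n : ℕ, a ^ n * b = lam ^ n • (b * a ^ n) := by
    intro n
    induction n with
    | zero => simp
    | succ m ih =>
      rw [pow_succ, mul_assoc, h, mul_smul_comm, ← mul_assoc, ih, smul_mul_assoc,
        smul_smul, pow_succ, mul_assoc b, mul_comm lam (lam ^ m)]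
  have hban : ∀ n : ℕ, b * a ^ n = (lam ^ n)⁻¹ • (a ^ n * b) := by
    intro n
    rw [habn n, inv_smul_smul₀ (pow_ne_zero n hlam)]
  -- key identities
  have hkey1 : ∀ m : ℕ, 1 ≤ m → (a * ad) * b - (a * ad) * b * (a * ad)
      = lam ^ m • (ad ^ m * (b * ((a * (1 - a * ad)) ^ m))) := by
    intro m hm
    have e1 : ad ^ m * (a ^ m * b) * (1 - a * ad)
        = (a * ad) * b - (a * ad) * b * (a * ad) := by
      rw [← mul_assoc (ad ^ m), hpm1 m hm]; noncomm_ring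
    rw [← e1, habn m, mul_smul_comm, smul_mul_assoc, hqm m hm]
    congr 1
    noncomm_ring
  have hkey2 : ∀ m : ℕ, 1 ≤ m → b * (a * ad) - (a * ad) * b * (a * ad)
      = (lam ^ m)⁻¹ • (((a * (1 - a * ad)) ^ m) * (b * ad ^ m)) := by
    intro m hm
    have e1 : (1 - a * ad) * (b * a ^ m) * ad ^ m
        = b * (a * ad) - (a * ad) * b * (a * ad) := by
      rw [mul_assoc (1 - a * ad), mul_assoc b, hpm2 m hm]
      noncomm_ring
    rw [← e1, hban m, mul_smul_comm, smul_mul_assoc, hqm m hm]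
    congr 1
    have : (1 - a * ad) * a ^ m = a ^ m * (1 - a * ad) :=
      ((haone.symm).pow_right m).eq
    rw [← mul_assoc, this]; noncomm_ring
  -- vanishing via quasinilpotence
  have hC1 : (0:ℝ) ≤ (‖lam‖ * ‖ad‖) ^ k := by positivity
  have hC2 : (0:ℝ) ≤ (‖lam‖⁻¹ * ‖ad‖) ^ k := by positivity
  have hz1 : (a * ad) * b - (a * ad) * b * (a * ad) = 0 := by
    apply vanish_aux ((a * (1 - a * ad)) ^ k) _ hJq _ ‖b‖ hC1 (norm_nonneg b)
    intro n hn
    have hm : 1 ≤ n * k := Nat.one_le_iff_ne_zero.mpr (by positivity)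
    rw [hkey1 (n * k) hm, norm_smul, norm_pow]
    calc ‖lam‖ ^ (n * k) * ‖ad ^ (n * k) * (b * (a * (1 - a * ad)) ^ (n * k))‖
        ≤ ‖lam‖ ^ (n * k) * (‖ad‖ ^ (n * k) * (‖b‖ * ‖(a * (1 - a * ad)) ^ (n * k)‖)) := by
          refine mul_le_mul_of_nonneg_left ?_ (by positivity)
          exact le_trans (norm_mul_le _ _) (mul_le_mul (norm_pow_le' ad (by omega))
            (norm_mul_le _ _) (norm_nonneg _) (pow_nonneg (norm_nonneg _) _))
      _ = ((‖lam‖ * ‖ad‖) ^ k) ^ n * ‖b‖ * ‖((a * (1 - a * ad)) ^ k) ^ n‖ := by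
          simp only [mul_pow, ← pow_mul, Nat.mul_comm k n]
          ring
  have hz2 : b * (a * ad) - (a * ad) * b * (a * ad) = 0 := by
    apply vanish_aux ((a * (1 - a * ad)) ^ k) _ hJq _ ‖b‖ hC2 (norm_nonneg b)
    intro n hn
    have hm : 1 ≤ n * k := Nat.one_le_iff_ne_zero.mpr (by positivity)
    rw [hkey2 (n * k) hm, norm_smul, norm_inv, norm_pow, ← inv_pow]
    calc ‖lam‖⁻¹ ^ (n * k) * ‖(a * (1 - a * ad)) ^ (n * k) * (b * ad ^ (n * k))‖
        ≤ ‖lam‖⁻¹ ^ (n * k) * (‖(a * (1 - a * ad)) ^ (n * k)‖ * (‖b‖ * ‖ad‖ ^ (n * k))) := by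
          refine mul_le_mul_of_nonneg_left ?_ (by positivity)
          exact le_trans (norm_mul_le _ _) (mul_le_mul_of_nonneg_left
            (le_trans (norm_mul_le _ _) (mul_le_mul_of_nonneg_left
              (norm_pow_le' ad (by omega)) (norm_nonneg _))) (norm_nonneg _))
      _ = ((‖lam‖⁻¹ * ‖ad‖) ^ k) ^ n * ‖b‖ * ‖((a * (1 - a * ad)) ^ k) ^ n‖ := by
          simp only [mul_pow, ← pow_mul, Nat.mul_comm k n]
          ring
  have e1 : (a * ad) * b = (a * ad) * b * (a * ad) := by
    have := sub_eq_zero.mp hz1; exact this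
  have e2 : b * (a * ad) = (a * ad) * b * (a * ad) := sub_eq_zero.mp hz2
  exact ⟨e1, e2, e1.trans e2.symm⟩
end
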